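/- arXiv:math/0607509 — 2 statements merged into one kernel-verified Lean document; each statement's English description precedes it below -/
import Mathlib

section
/- Let (Y₁,d₁) and (Y₂,d₂) be δ-hyperbolic geodesic metric spaces. Let μ₁ be a geodesic segment in Y₁ joining points a and b, let p ∈ Y₁, and let q ∈ μ₁ be a point with d₁(p,q) ≤ d₁(p,x) for all x ∈ μ₁. Let φ : Y₁ → Y₂ be a (K,ε)-quasi-isometric embedding, let μ₂ be a geodesic segment in Y₂ joining φ(a) and φ(b), and let r ∈ μ₂ be a point with d₂(φ(p),r) ≤ d₂(φ(p),x) for all x ∈ μ₂. Then d₂(r,φ(q)) ≤ C₄ for a constant C₄ depending only on K, ε and δ. -/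
noncomputable section

open Metric Set

/-- A geodesic segment from `a` to `b` in a metric space:
an isometric parametrization of the interval `[0, dist a b]`. -/
def IsGeodesicSegment {X : Type*} [MetricSpace X] (f : ℝ → X) (a b : X) : Prop :=
  f 0 = a ∧ f (dist a b) = b ∧
    ∀ s ∈ Set.Icc (0 : ℝ) (dist a b), ∀ t ∈ Set.Icc (0 : ℝ) (dist a b),
      dist (f s) (f t) = |s - t|

/-- The image of a geodesic segment from `a` to `b`. -/
def geodImage {X : Type*} [MetricSpace X] (f : ℝ → X) (a b : X) : Set X :=
  f '' Set.Icc (0 : ℝ) (dist a b)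

/-- A geodesic metric space: any two points are joined by a geodesic segment. -/
def IsGeodesicSpace (X : Type*) [MetricSpace X] : Prop :=
  ∀ a b : X, ∃ f : ℝ → X, IsGeodesicSegment f a b

/-- `δ`-hyperbolicity: every geodesic triangle is `δ`-thin, i.e. each side is contained in
the `δ`-neighborhood of the union of the other two sides. -/
def IsDeltaHyperbolic (X : Type*) [MetricSpace X] (δ : ℝ) : Prop :=
  ∀ (a b c : X) (f g h : ℝ → X),
    IsGeodesicSegment f a b → IsGeodesicSegment g b c → IsGeodesicSegment h a c →
    ∀ x ∈ geodImage h a c, ∃ y ∈ geodImage f a b ∪ geodImage g b c, dist x y ≤ δ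

/-- A subset `Z` is `C`-quasiconvex: every geodesic segment joining two points of `Z`
lies in the `C`-neighborhood of `Z`. -/
def IsQuasiconvexSet {X : Type*} [MetricSpace X] (C : ℝ) (Z : Set X) : Prop :=
  ∀ a ∈ Z, ∀ b ∈ Z, ∀ f : ℝ → X, IsGeodesicSegment f a b →
    ∀ x ∈ geodImage f a b, ∃ z ∈ Z, dist x z ≤ C

/-! Nearest-point projection onto a geodesic segment is coarsely a right angle and coarsely
contracting. A geodesic from `w` to a point `z` of the segment passes `3δ`-close to the
projection `π` of `w`, so `d(w, π) + d(π, z) ≤ d(w, z) + 6δ`; and two points at distance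
`R > 8δ` from the segment that are `R / 2`-close have `8δ`-close projections.

Contraction gives the Morse lemma: sample a quasi-geodesic at a spacing where it advances more
than `8δ` per step. Along a run of samples far from the geodesic their projections advance at
most `8δ` per step, so the run is short, and every sample stays boundedly close to the geodesic;
the projections of the samples then fill the geodesic up to bounded gaps.

For the theorem: the geodesic from `p` to any `x ∈ μ₁` passes near `q`, so by the Morse lemma
`φ q` nearly minimises the distance from `φ p` to `φ(μ₁)`. By the Morse lemma again `φ(μ₁)` and
`μ₂` are Hausdorff close, so a point `q'` of `μ₂` near `φ q` nearly minimises the distance from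
`φ p` to `μ₂`, and the right-angle inequality at `r` bounds `d(r, q')`.
-/

def IsNearestPoint {X : Type*} [MetricSpace X] (S : Set X) (x p : X) : Prop :=
  p ∈ S ∧ ∀ z ∈ S, dist x p ≤ dist x z

def IsQuasiIsometricEmbedding {X Y : Type*} [MetricSpace X] [MetricSpace Y]
    (K ε : ℝ) (φ : X → Y) : Prop :=
  ∀ x₁ x₂ : X, (1 / K) * dist x₁ x₂ - ε ≤ dist (φ x₁) (φ x₂) ∧
    dist (φ x₁) (φ x₂) ≤ K * dist x₁ x₂ + ε

def IsQuasiGeodesicOn {X : Type*} [MetricSpace X] (K ε T : ℝ) (ψ : ℝ → X) : Prop :=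
  ∀ s ∈ Icc 0 T, ∀ t ∈ Icc 0 T,
    (1 / K) * |s - t| - ε ≤ dist (ψ s) (ψ t) ∧ dist (ψ s) (ψ t) ≤ K * |s - t| + ε

variable {X : Type*} [MetricSpace X]

namespace IsGeodesicSegment

variable {f : ℝ → X} {a b : X}

theorem left_mem_geodImage (hf : IsGeodesicSegment f a b) : a ∈ geodImage f a b :=
  ⟨0, ⟨le_rfl, dist_nonneg⟩, hf.1⟩

theorem right_mem_geodImage (hf : IsGeodesicSegment f a b) : b ∈ geodImage f a b :=
  ⟨dist a b, ⟨dist_nonneg, le_rfl⟩, hf.2.1⟩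

theorem continuousOn (hf : IsGeodesicSegment f a b) : ContinuousOn f (Icc 0 (dist a b)) := by
  refine (LipschitzOnWith.of_dist_le_mul fun s hs t ht => ?_).continuousOn (K := 1)
  rw [hf.2.2 s hs t ht, Real.dist_eq, NNReal.coe_one, one_mul]

theorem isCompact_geodImage (hf : IsGeodesicSegment f a b) : IsCompact (geodImage f a b) :=
  isCompact_Icc.image_of_continuousOn hf.continuousOn

theorem dist_left_apply (hf : IsGeodesicSegment f a b) {t : ℝ} (ht : t ∈ Icc 0 (dist a b)) :
    dist a (f t) = t := by
  rw [← hf.1, hf.2.2 0 ⟨le_rfl, dist_nonneg⟩ t ht, zero_sub, abs_neg, abs_of_nonneg ht.1]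

theorem dist_apply_right (hf : IsGeodesicSegment f a b) {t : ℝ} (ht : t ∈ Icc 0 (dist a b)) :
    dist (f t) b = dist a b - t := by
  conv_lhs => rw [← hf.2.1]
  rw [hf.2.2 t ht _ ⟨dist_nonneg, le_rfl⟩, abs_of_nonpos (sub_nonpos.2 ht.2), neg_sub]

theorem dist_add_dist_of_mem (hf : IsGeodesicSegment f a b) {z : X} (hz : z ∈ geodImage f a b) :
    dist a z + dist z b = dist a b := by
  obtain ⟨t, ht, rfl⟩ := hz
  rw [hf.dist_left_apply ht, hf.dist_apply_right ht, add_sub_cancel]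

theorem apply_dist_left (hf : IsGeodesicSegment f a b) {z : X} (hz : z ∈ geodImage f a b) :
    f (dist a z) = z := by
  obtain ⟨t, ht, rfl⟩ := hz
  rw [hf.dist_left_apply ht]

theorem dist_left_mem_Icc (hf : IsGeodesicSegment f a b) {z : X} (hz : z ∈ geodImage f a b) :
    dist a z ∈ Icc 0 (dist a b) := by
  obtain ⟨t, ht, rfl⟩ := hz
  rwa [hf.dist_left_apply ht]

theorem reverse (hf : IsGeodesicSegment f a b) :
    IsGeodesicSegment (fun t => f (dist a b - t)) b a ∧
      geodImage (fun t => f (dist a b - t)) b a = geodImage f a b := by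
  have hIcc : ∀ t ∈ Icc 0 (dist a b), dist a b - t ∈ Icc 0 (dist a b) :=
    fun t ht => ⟨sub_nonneg.2 ht.2, sub_le_self _ ht.1⟩
  simp only [IsGeodesicSegment, geodImage, dist_comm b a, sub_zero, sub_self]
  refine ⟨⟨hf.2.1, hf.1, fun s hs t ht => ?_⟩, ?_⟩
  · rw [hf.2.2 _ (hIcc s hs) _ (hIcc t ht), ← abs_neg]
    ring_nf
  · ext z
    constructor
    · rintro ⟨t, ht, rfl⟩
      exact ⟨_, hIcc t ht, rfl⟩
    · rintro ⟨t, ht, rfl⟩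
      exact ⟨dist a b - t, hIcc t ht, by simp only [sub_sub_cancel]⟩

theorem exists_subsegment_of_le (hf : IsGeodesicSegment f a b) {s t : ℝ}
    (hs : s ∈ Icc 0 (dist a b)) (ht : t ∈ Icc 0 (dist a b)) (hst : s ≤ t) :
    ∃ g : ℝ → X, IsGeodesicSegment g (f s) (f t) ∧ geodImage g (f s) (f t) ⊆ geodImage f a b := by
  have hlen : dist (f s) (f t) = t - s := by
    rw [hf.2.2 s hs t ht, abs_sub_comm, abs_of_nonneg (by linarith)]
  have hmem : ∀ u ∈ Icc 0 (dist (f s) (f t)), s + u ∈ Icc 0 (dist a b) := by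
    rw [hlen]
    exact fun u hu => ⟨by linarith [hs.1, hu.1], by linarith [ht.2, hu.2]⟩
  refine ⟨fun u => f (s + u),
    ⟨by simp, by simp only [hlen, add_sub_cancel], fun u hu v hv => ?_⟩, ?_⟩
  · rw [hf.2.2 _ (hmem u hu) _ (hmem v hv), add_sub_add_left_eq_sub]
  · rintro z ⟨u, hu, rfl⟩
    exact ⟨s + u, hmem u hu, rfl⟩

theorem exists_subsegment (hf : IsGeodesicSegment f a b) {z w : X}
    (hz : z ∈ geodImage f a b) (hw : w ∈ geodImage f a b) :
    ∃ g : ℝ → X, IsGeodesicSegment g z w ∧ geodImage g z w ⊆ geodImage f a b := by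
  obtain ⟨s, hs, rfl⟩ := hz
  obtain ⟨t, ht, rfl⟩ := hw
  rcases le_total s t with hst | hts
  · exact hf.exists_subsegment_of_le hs ht hst
  · obtain ⟨g, hg, hsub⟩ := hf.exists_subsegment_of_le ht hs hts
    exact ⟨_, hg.reverse.1, hg.reverse.2.symm ▸ hsub⟩

theorem exists_isNearestPoint (hf : IsGeodesicSegment f a b) (x : X) :
    ∃ p, IsNearestPoint (geodImage f a b) x p := by
  obtain ⟨p, hp, hd⟩ :=
    hf.isCompact_geodImage.exists_infDist_eq_dist ⟨a, hf.left_mem_geodImage⟩ x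
  exact ⟨p, hp, fun z hz => hd ▸ infDist_le_dist_of_mem hz⟩

end IsGeodesicSegment

namespace IsNearestPoint

variable {S : Set X} {x y p q : X}

theorem of_dist_add_dist_eq (h : IsNearestPoint S x p) {u : X}
    (hu : dist x u + dist u p = dist x p) : IsNearestPoint S u p :=
  ⟨h.1, fun z hz => by linarith [h.2 z hz, dist_triangle x u z]⟩

theorem dist_le_dist_add (hx : IsNearestPoint S x p) (hy : IsNearestPoint S y q) :
    dist x p ≤ dist x y + dist y q :=
  (hx.2 q hy.1).trans (dist_triangle x y q)

theorem eq_of_mem (h : IsNearestPoint S x p) (hx : x ∈ S) : p = x :=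
  (dist_le_zero.1 (by simpa using h.2 x hx)).symm

end IsNearestPoint

namespace IsDeltaHyperbolic

variable {δ : ℝ} (hX : IsDeltaHyperbolic X δ) (hδ : 0 ≤ δ)
include hX hδ

theorem exists_near_both_sides {f g h : ℝ → X} {a b c : X} (hf : IsGeodesicSegment f a b)
    (hg : IsGeodesicSegment g b c) (hh : IsGeodesicSegment h a c) :
    ∃ m ∈ geodImage h a c,
      (∃ u ∈ geodImage f a b, dist m u ≤ δ) ∧ ∃ v ∈ geodImage g b c, dist m v ≤ δ := by
  -- The parameters in `[0, dist a c]` whose point is `δ`-close to `[a, b]`, resp. to `[b, c]`,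
  -- form two closed sets covering the interval, so they meet.
  set I := Icc 0 (dist a c)
  set near : Set X → Set ℝ := fun A => I ∩ (fun t => infDist (h t) A) ⁻¹' Iic δ
  have hclosed : ∀ A, IsClosed (near A) := fun A =>
    ((continuous_infDist_pt A).comp_continuousOn hh.continuousOn).preimage_isClosed_of_isClosed
      isClosed_Icc isClosed_Iic
  have hcover : I ⊆ near (geodImage f a b) ∪ near (geodImage g b c) := by
    intro t ht
    obtain ⟨y, hy | hy, hyd⟩ := hX a b c f g h hf hg hh (h t) ⟨t, ht, rfl⟩
    · exact Or.inl ⟨ht, (infDist_le_dist_of_mem hy).trans hyd⟩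
    · exact Or.inr ⟨ht, (infDist_le_dist_of_mem hy).trans hyd⟩
  have hI : (0 : ℝ) ∈ I ∧ dist a c ∈ I := ⟨⟨le_rfl, dist_nonneg⟩, ⟨dist_nonneg, le_rfl⟩⟩
  have hstart : (I ∩ near (geodImage f a b)).Nonempty := by
    refine ⟨0, hI.1, hI.1, ?_⟩
    simp only [mem_preimage, hh.1, infDist_zero_of_mem hf.left_mem_geodImage, mem_Iic, hδ]
  have hend : (I ∩ near (geodImage g b c)).Nonempty := by
    refine ⟨dist a c, hI.2, hI.2, ?_⟩
    simp only [mem_preimage, hh.2.1, infDist_zero_of_mem hg.right_mem_geodImage, mem_Iic, hδ]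
  obtain ⟨t, ht, ⟨-, htf⟩, ⟨-, htg⟩⟩ := isPreconnected_closed_iff.1 isPreconnected_Icc _ _
    (hclosed _) (hclosed _) hcover hstart hend
  obtain ⟨u, hu, hmu⟩ :=
    hf.isCompact_geodImage.exists_infDist_eq_dist ⟨a, hf.left_mem_geodImage⟩ (h t)
  obtain ⟨v, hv, hmv⟩ :=
    hg.isCompact_geodImage.exists_infDist_eq_dist ⟨b, hg.left_mem_geodImage⟩ (h t)
  exact ⟨h t, ⟨t, ht, rfl⟩, ⟨u, hu, hmu ▸ htf⟩, ⟨v, hv, hmv ▸ htg⟩⟩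

variable (hgeo : IsGeodesicSpace X) {f : ℝ → X} {a b : X} (hf : IsGeodesicSegment f a b)
include hgeo hf

theorem exists_mem_dist_nearestPoint_le {w p z : X} (hp : IsNearestPoint (geodImage f a b) w p)
    (hz : z ∈ geodImage f a b) {h : ℝ → X} (hh : IsGeodesicSegment h w z) :
    ∃ m ∈ geodImage h w z, dist m p ≤ 3 * δ := by
  obtain ⟨g, hg, hgS⟩ := hf.exists_subsegment hp.1 hz
  obtain ⟨k, hk⟩ := hgeo w p
  obtain ⟨m, hm, ⟨u, hu, hmu⟩, ⟨v, hv, hmv⟩⟩ := hX.exists_near_both_sides hδ hk hg hh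
  have hup : dist u p ≤ dist u v :=
    (hp.of_dist_add_dist_eq (hk.dist_add_dist_of_mem hu)).2 v (hgS hv)
  refine ⟨m, hm, ?_⟩
  linarith [dist_triangle m u p, dist_triangle u m v, dist_comm m u]

theorem dist_add_dist_le_of_isNearestPoint {w p z : X}
    (hp : IsNearestPoint (geodImage f a b) w p) (hz : z ∈ geodImage f a b) :
    dist w p + dist p z ≤ dist w z + 6 * δ := by
  obtain ⟨h, hh⟩ := hgeo w z
  obtain ⟨m, hm, hmp⟩ := hX.exists_mem_dist_nearestPoint_le hδ hgeo hf hp hz hh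
  linarith [hh.dist_add_dist_of_mem hm, dist_triangle w m p, dist_triangle p m z, dist_comm m p]

theorem dist_nearestPoint_le_of_far {w y p q : X} (hp : IsNearestPoint (geodImage f a b) w p)
    (hq : IsNearestPoint (geodImage f a b) y q) (hfar : 8 * δ < dist w p)
    (hclose : 2 * dist w y ≤ dist w p) : dist p q ≤ 8 * δ := by
  by_contra! hpq
  obtain ⟨g, hg, hgS⟩ := hf.exists_subsegment hp.1 hq.1
  have hmid : dist p q / 2 ∈ Icc 0 (dist p q) := ⟨by linarith, by linarith⟩
  set z := g (dist p q / 2)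
  have hzp : dist p z = dist p q / 2 := hg.dist_left_apply hmid
  have hzq : dist z q = dist p q / 2 := by rw [hg.dist_apply_right hmid]; ring
  have hzS : z ∈ geodImage f a b := hgS ⟨_, hmid, rfl⟩
  -- The midpoint `z` of `[p, q]` is `2δ`-close to `[p, w] ∪ [w, y] ∪ [y, q]`, and each
  -- alternative contradicts the choice of `p` or `q`, or the bounds on `w`.
  obtain ⟨k₁, hk₁⟩ := hgeo p w
  obtain ⟨k₂, hk₂⟩ := hgeo w q
  obtain ⟨k₃, hk₃⟩ := hgeo w y
  obtain ⟨k₄, hk₄⟩ := hgeo y q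
  obtain ⟨y₁, hy₁ | hy₁, hzy₁⟩ := hX p w q k₁ k₂ g hk₁ hk₂ hg z ⟨_, hmid, rfl⟩
  · have hp₁ : IsNearestPoint _ y₁ p :=
      hp.of_dist_add_dist_eq (by
        linarith [hk₁.dist_add_dist_of_mem hy₁, dist_comm p y₁, dist_comm p w, dist_comm w y₁])
    linarith [hp₁.2 z hzS, dist_triangle p y₁ z, dist_comm p y₁, dist_comm z y₁]
  obtain ⟨y₂, hy₂ | hy₂, hy₁y₂⟩ := hX w y q k₃ k₄ k₂ hk₃ hk₄ hk₂ y₁ hy₁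
  · linarith [hp.2 z hzS, dist_triangle w y₂ z, dist_triangle z y₁ y₂, dist_comm z y₂,
      hk₃.dist_add_dist_of_mem hy₂, dist_nonneg (x := y₂) (y := y)]
  · have hq₂ : IsNearestPoint _ y₂ q := hq.of_dist_add_dist_eq (hk₄.dist_add_dist_of_mem hy₂)
    linarith [hq₂.2 z hzS, dist_triangle z y₂ q, dist_triangle z y₁ y₂, dist_comm z y₂]

end IsDeltaHyperbolic

theorem exists_maximal_run {P : ℕ → Prop} {i n : ℕ} (hin : i ≤ n) (h0 : ¬P 0) (hn : ¬P n)
    (hi : P i) : ∃ j₁ j₂, j₁ < i ∧ i < j₂ ∧ j₂ ≤ n ∧ ¬P j₁ ∧ ¬P j₂ ∧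
      ∀ j, j₁ < j → j < j₂ → P j := by
  classical
  have hex : ∃ k, i ≤ k ∧ ¬P k := ⟨n, hin, hn⟩
  obtain ⟨j₁, hj₁, hj₁i, hj₁max⟩ : ∃ j₁, ¬P j₁ ∧ j₁ ≤ i ∧ ∀ j, j₁ < j → j ≤ i → P j :=
    ⟨_, Nat.findGreatest_spec (P := fun j => ¬P j) (Nat.zero_le i) h0, Nat.findGreatest_le i,
      fun j h₁ h₂ => not_not.1 (Nat.findGreatest_is_greatest h₁ h₂)⟩
  obtain ⟨j₂, ⟨hij₂, hj₂⟩, hj₂n, hj₂min⟩ :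
      ∃ j₂, (i ≤ j₂ ∧ ¬P j₂) ∧ j₂ ≤ n ∧ ∀ j, j < j₂ → ¬(i ≤ j ∧ ¬P j) :=
    ⟨Nat.find hex, Nat.find_spec hex, Nat.find_min' hex ⟨hin, hn⟩, fun j => Nat.find_min hex⟩
  refine ⟨j₁, j₂, hj₁i.lt_of_ne ?_, hij₂.lt_of_ne ?_, hj₂n, hj₁, hj₂, fun j h₁ h₂ => ?_⟩
  · rintro rfl; exact hj₁ hi
  · rintro rfl; exact hj₂ hi
  · rcases le_or_gt j i with hji | hij
    · exact hj₁max j h₁ hji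
    · by_contra hj
      exact hj₂min j h₂ ⟨hij.le, hj⟩

theorem dist_le_mul_of_dist_succ_le {f : ℕ → X} {m n : ℕ} {c : ℝ} (hmn : m ≤ n)
    (h : ∀ k, m ≤ k → k < n → dist (f k) (f (k + 1)) ≤ c) :
    dist (f m) (f n) ≤ ((n : ℝ) - m) * c := by
  have := dist_le_Ico_sum_of_dist_le hmn fun {k} => h k
  rwa [Finset.sum_const, Nat.card_Ico, nsmul_eq_mul, Nat.cast_sub hmn] at this

theorem exists_abs_sub_le_of_abs_succ_sub_le {u : ℕ → ℝ} {g v : ℝ} (hg : 0 ≤ g) :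
    ∀ {n : ℕ}, (∀ i < n, |u (i + 1) - u i| ≤ g) → u 0 ≤ v → v ≤ u n →
      ∃ i ≤ n, |v - u i| ≤ g
  | 0, _, h0, hn => ⟨0, le_rfl, by rw [le_antisymm hn h0, sub_self, abs_zero]; exact hg⟩
  | n + 1, hstep, h0, hn => by
    rcases le_or_gt v (u n) with hv | hv
    · obtain ⟨i, hi, hvi⟩ :=
        exists_abs_sub_le_of_abs_succ_sub_le hg (fun i hi => hstep i (by omega)) h0 hv
      exact ⟨i, by omega, hvi⟩
    · refine ⟨n, by omega, ?_⟩
      rw [abs_of_pos (sub_pos.2 hv)]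
      linarith [le_abs_self (u (n + 1) - u n), hstep n (by omega)]

theorem IsGeodesicSegment.exists_dist_le_of_chain {f : ℝ → X} {a b : X}
    (hf : IsGeodesicSegment f a b) {p : ℕ → X} {n : ℕ} {g : ℝ} (hg : 0 ≤ g)
    (hp : ∀ i, p i ∈ geodImage f a b) (h0 : p 0 = a) (hn : p n = b)
    (hstep : ∀ i < n, dist (p i) (p (i + 1)) ≤ g) {z : X} (hz : z ∈ geodImage f a b) :
    ∃ i ≤ n, dist z (p i) ≤ g := by
  obtain ⟨v, hv, rfl⟩ := hz
  obtain ⟨i, hi, hvi⟩ := exists_abs_sub_le_of_abs_succ_sub_le (u := fun i => dist a (p i)) (n := n)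
    hg (fun i hi => by
      show |dist a (p (i + 1)) - dist a (p i)| ≤ g
      rw [dist_comm a, dist_comm a]
      exact (abs_dist_sub_le _ _ a).trans ((dist_comm _ _).trans_le (hstep i hi)))
    (by simpa [h0] using hv.1) (by simpa [hn] using hv.2)
  refine ⟨i, hi, ?_⟩
  rwa [← hf.apply_dist_left (hp i), hf.2.2 v hv _ (hf.dist_left_mem_Icc (hp i))]

namespace IsDeltaHyperbolic

variable {δ : ℝ} (hX : IsDeltaHyperbolic X δ) (hδ : 0 ≤ δ) (hgeo : IsGeodesicSpace X)
  {f : ℝ → X} {a b : X} (hf : IsGeodesicSegment f a b)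
  {x p : ℕ → X} {n : ℕ} {s e H : ℝ} (hp : ∀ i, IsNearestPoint (geodImage f a b) (x i) (p i))
  (hH : 2 * s + 8 * δ ≤ H) (hstep : ∀ i < n, dist (x i) (x (i + 1)) ≤ s)
  (hlow : ∀ i j, i ≤ j → j ≤ n → ((j : ℝ) - i) * (8 * δ + 1) - e ≤ dist (x i) (x j))
include hX hδ hgeo hf hp hH hstep hlow

theorem sub_le_of_far_run {j₁ j₂ : ℕ} (hj₁j₂ : j₁ < j₂) (hj₂n : j₂ ≤ n)
    (hj₁ : dist (x j₁) (p j₁) ≤ H) (hj₂ : dist (x j₂) (p j₂) ≤ H)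
    (hrun : ∀ j, j₁ < j → j < j₂ → H < dist (x j) (p j)) :
    (j₂ : ℝ) - (j₁ + 1) ≤ 2 * H + s + e := by
  have hs : 0 ≤ s := dist_nonneg.trans (hstep j₁ (by omega))
  have hchain : dist (p (j₁ + 1)) (p j₂) ≤ ((j₂ : ℝ) - (j₁ + 1 : ℕ)) * (8 * δ) :=
    dist_le_mul_of_dist_succ_le (by omega) fun k hk₁ hk₂ => by
      have hfar := hrun k (by omega) hk₂
      exact hX.dist_nearestPoint_le_of_far hδ hgeo hf (hp k) (hp (k + 1)) (by linarith)
        (by linarith [hstep k (by omega)])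
  have hfirst : dist (x (j₁ + 1)) (p (j₁ + 1)) ≤ H + s := by
    linarith [(hp (j₁ + 1)).dist_le_dist_add (hp j₁), hstep j₁ (by omega),
      dist_comm (x j₁) (x (j₁ + 1))]
  have hlower := hlow (j₁ + 1) j₂ (by omega) hj₂n
  have hupper := dist_triangle4 (x (j₁ + 1)) (p (j₁ + 1)) (p j₂) (x j₂)
  push_cast at hchain hlower
  linarith [dist_comm (p j₂) (x j₂)]

theorem dist_nearestPoint_le_of_coarsePath (hs : 0 ≤ s) (h0 : x 0 ∈ geodImage f a b)
    (hn : x n ∈ geodImage f a b) {i : ℕ} (hi : i ≤ n) :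
    dist (x i) (p i) ≤ H + (2 * H + s + e) * s := by
  have he : 0 ≤ e := by simpa using hlow 0 0 le_rfl (Nat.zero_le n)
  have hH0 : 0 ≤ H := by linarith
  have hslack : 0 ≤ (2 * H + s + e) * s := by positivity
  by_cases hiH : dist (x i) (p i) ≤ H
  · linarith
  have hend : ∀ k, x k ∈ geodImage f a b → ¬H < dist (x k) (p k) := fun k hk => by
    rw [(hp k).eq_of_mem hk, dist_self]
    exact not_lt.2 hH0
  obtain ⟨j₁, j₂, hj₁i, hij₂, hj₂n, hj₁, hj₂, hrun⟩ :=
    exists_maximal_run (P := fun j => H < dist (x j) (p j)) hi (hend 0 h0) (hend n hn)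
      (not_le.1 hiH)
  have hwidth := hX.sub_le_of_far_run hδ hgeo hf hp hH hstep hlow (hj₁i.trans hij₂) hj₂n
    (not_lt.1 hj₁) (not_lt.1 hj₂) hrun
  have hji : dist (x j₁) (x i) ≤ ((i : ℝ) - j₁) * s :=
    dist_le_mul_of_dist_succ_le hj₁i.le fun k _ hk => hstep k (by omega)
  have hij₂' : (i : ℝ) + 1 ≤ j₂ := by exact_mod_cast hij₂
  have hlen : (i : ℝ) - j₁ ≤ 2 * H + s + e := by linarith
  nlinarith [(hp i).dist_le_dist_add (hp j₁), dist_comm (x i) (x j₁), not_lt.1 hj₁]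

end IsDeltaHyperbolic

def sample (τ T : ℝ) (i : ℕ) : ℝ := min (i * τ) T

section Sample

variable {τ T : ℝ}

theorem sample_mem_Icc (hτ : 0 ≤ τ) (hT : 0 ≤ T) (i : ℕ) : sample τ T i ∈ Icc 0 T :=
  ⟨le_min (by positivity) hT, min_le_right _ _⟩

theorem sample_zero (hT : 0 ≤ T) : sample τ T 0 = 0 := by simp [sample, hT]

theorem sample_ceil (hτ : 0 < τ) : sample τ T ⌈T / τ⌉₊ = T :=
  min_eq_right ((div_le_iff₀ hτ).1 (Nat.le_ceil _))

theorem sample_mono (hτ : 0 ≤ τ) : Monotone (sample τ T) := fun _ _ hij =>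
  min_le_min_right T (mul_le_mul_of_nonneg_right (Nat.cast_le.2 hij) hτ)

theorem sample_succ_sub_le (hτ : 0 ≤ τ) (i : ℕ) : sample τ T (i + 1) - sample τ T i ≤ τ := by
  rw [sub_le_iff_le_add, sample, sample, ← min_add_add_left]
  exact min_le_min (by push_cast; linarith) (by linarith)

theorem sub_one_mul_le_sample_sub (hτ : 0 < τ) (hT : 0 ≤ T) {i j : ℕ} (hj : j ≤ ⌈T / τ⌉₊) :
    ((j : ℝ) - i - 1) * τ ≤ sample τ T j - sample τ T i := by
  have hjT : ((j : ℝ) - 1) * τ ≤ T := by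
    have := (Nat.cast_le.2 hj).trans_lt (Nat.ceil_lt_add_one (div_nonneg hT hτ.le))
    rw [← sub_lt_iff_lt_add, lt_div_iff₀ hτ] at this
    exact this.le
  have : ((j : ℝ) - 1) * τ ≤ sample τ T j := le_min (by linarith) hjT
  linarith [min_le_left ((i : ℝ) * τ) T, show sample τ T i = min ((i : ℝ) * τ) T from rfl]

theorem exists_abs_sub_sample_le (hτ : 0 < τ) {t : ℝ} (ht : t ∈ Icc 0 T) :
    ∃ i ≤ ⌈T / τ⌉₊, |t - sample τ T i| ≤ τ := by
  have hdiv : 0 ≤ t / τ := div_nonneg ht.1 hτ.le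
  have hlow : (⌊t / τ⌋₊ : ℝ) * τ ≤ t := (le_div_iff₀ hτ).1 (Nat.floor_le hdiv)
  have hhigh : t < (⌊t / τ⌋₊ + 1 : ℝ) * τ := (div_lt_iff₀ hτ).1 (Nat.lt_floor_add_one _)
  refine ⟨⌊t / τ⌋₊, (Nat.floor_le_floor (div_le_div_of_nonneg_right ht.2 hτ.le)).trans
    (Nat.floor_le_ceil _), ?_⟩
  rw [sample, min_eq_left (hlow.trans ht.2), abs_of_nonneg (by linarith)]
  linarith

end Sample

namespace IsQuasiGeodesicOn

variable {K ε T τ : ℝ} {ψ : ℝ → X}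

theorem dist_sample_succ_le (hψ : IsQuasiGeodesicOn K ε T ψ) (hK : 0 ≤ K) (hτ : 0 ≤ τ)
    (hT : 0 ≤ T) (i : ℕ) : dist (ψ (sample τ T i)) (ψ (sample τ T (i + 1))) ≤ K * τ + ε := by
  have h := (hψ _ (sample_mem_Icc hτ hT i) _ (sample_mem_Icc hτ hT (i + 1))).2
  rw [abs_sub_comm, abs_of_nonneg (sub_nonneg.2 (sample_mono hτ (Nat.le_succ i)))] at h
  nlinarith [sample_succ_sub_le (T := T) hτ i]

theorem le_dist_sample (hψ : IsQuasiGeodesicOn K ε T ψ) (hK : 0 < K) (hτ : 0 < τ) (hT : 0 ≤ T)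
    {i j : ℕ} (hij : i ≤ j) (hj : j ≤ ⌈T / τ⌉₊) :
    ((j : ℝ) - i) * (τ / K) - (τ / K + ε) ≤ dist (ψ (sample τ T i)) (ψ (sample τ T j)) := by
  have h := (hψ _ (sample_mem_Icc hτ.le hT i) _ (sample_mem_Icc hτ.le hT j)).1
  rw [abs_sub_comm, abs_of_nonneg (sub_nonneg.2 (sample_mono hτ.le hij))] at h
  have hgap := mul_le_mul_of_nonneg_left (sub_one_mul_le_sample_sub hτ hT (i := i) hj)
    (one_div_nonneg.2 hK.le)
  calc ((j : ℝ) - i) * (τ / K) - (τ / K + ε) = 1 / K * (((j : ℝ) - i - 1) * τ) - ε := by ring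
    _ ≤ _ := by linarith

end IsQuasiGeodesicOn

/-- The step length of a `(K, ε)`-quasi-geodesic sampled at spacing `K * (8 * δ + 1)`, a spacing
at which it advances more than `8 * δ` per step. -/
def morseStep (K ε δ : ℝ) : ℝ := K * (K * (8 * δ + 1)) + ε

/-- `H` is the distance from the geodesic beyond which nearest-point projection contracts sample
steps to length `8 * δ`; a run of samples beyond `H` has at most
`2 * H + morseStep K ε δ + (8 * δ + 1 + ε)` steps. -/
def morseRadius (K ε δ : ℝ) : ℝ :=
  let H := 2 * morseStep K ε δ + 8 * δ
  H + (2 * H + morseStep K ε δ + (8 * δ + 1 + ε)) * morseStep K ε δ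

def morseConst (K ε δ : ℝ) : ℝ := 3 * morseRadius K ε δ + morseStep K ε δ

theorem morseConst_nonneg {K ε δ : ℝ} (hK : 0 ≤ K) (hε : 0 ≤ ε) (hδ : 0 ≤ δ) :
    0 ≤ morseConst K ε δ := by
  simp only [morseConst, morseRadius, morseStep]
  positivity

namespace IsDeltaHyperbolic

variable {δ : ℝ} (hX : IsDeltaHyperbolic X δ) (hδ : 0 ≤ δ) (hgeo : IsGeodesicSpace X)
  {f : ℝ → X} {a b : X} (hf : IsGeodesicSegment f a b)
  {K ε T : ℝ} (hK : 1 ≤ K) (hε : 0 ≤ ε) (hT : 0 ≤ T) {ψ : ℝ → X}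
  (hψ : IsQuasiGeodesicOn K ε T ψ) (ha : ψ 0 = a) (hb : ψ T = b)
include hX hδ hgeo hf hK hε hT hψ ha hb

theorem dist_sample_nearestPoint_le {p : ℕ → X}
    (hp : ∀ i, IsNearestPoint (geodImage f a b) (ψ (sample (K * (8 * δ + 1)) T i)) (p i))
    {i : ℕ} (hi : i ≤ ⌈T / (K * (8 * δ + 1))⌉₊) :
    dist (ψ (sample (K * (8 * δ + 1)) T i)) (p i) ≤ morseRadius K ε δ := by
  have hK0 : 0 < K := by linarith
  have hτ : 0 < K * (8 * δ + 1) := by positivity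
  have hτK : K * (8 * δ + 1) / K = 8 * δ + 1 := mul_div_cancel_left₀ _ hK0.ne'
  refine hX.dist_nearestPoint_le_of_coarsePath hδ hgeo hf hp le_rfl
    (fun i _ => hψ.dist_sample_succ_le hK0.le hτ.le hT i)
    (fun i j hij hj => by simpa only [hτK] using hψ.le_dist_sample hK0 hτ hT hij hj)
    (by positivity) ?_ ?_ hi
  · rw [sample_zero hT, ha]
    exact hf.left_mem_geodImage
  · rw [sample_ceil hτ, hb]
    exact hf.right_mem_geodImage

theorem morse :
    (∀ t ∈ Icc 0 T, ∃ w ∈ geodImage f a b, dist (ψ t) w ≤ morseConst K ε δ) ∧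
      ∀ z ∈ geodImage f a b, ∃ t ∈ Icc 0 T, dist z (ψ t) ≤ morseConst K ε δ := by
  have hK0 : 0 < K := by linarith
  set τ := K * (8 * δ + 1)
  have hτ : 0 < τ := by positivity
  have hs : 0 ≤ morseStep K ε δ := by simp only [morseStep]; positivity
  have hD : 0 ≤ morseRadius K ε δ := by simp only [morseRadius, morseStep]; positivity
  set x : ℕ → X := fun i => ψ (sample τ T i)
  have hstep : ∀ i, dist (x i) (x (i + 1)) ≤ morseStep K ε δ :=
    hψ.dist_sample_succ_le hK0.le hτ.le hT
  choose p hp using fun i => hf.exists_isNearestPoint (x i)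
  have hxp : ∀ {i}, i ≤ ⌈T / τ⌉₊ → dist (x i) (p i) ≤ morseRadius K ε δ :=
    hX.dist_sample_nearestPoint_le hδ hgeo hf hK hε hT hψ ha hb hp
  unfold morseConst
  refine ⟨fun t ht => ?_, fun z hz => ?_⟩
  · obtain ⟨i, hi, hti⟩ := exists_abs_sub_sample_le hτ ht
    have hψx : dist (ψ t) (x i) ≤ morseStep K ε δ := by
      have := (hψ t ht _ (sample_mem_Icc hτ.le hT i)).2
      simp only [morseStep]
      nlinarith
    exact ⟨p i, (hp i).1, by linarith [dist_triangle (ψ t) (x i) (p i), hxp hi]⟩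
  · have hx0 : x 0 = a := by simp only [x, sample_zero hT, ha]
    have hxn : x ⌈T / τ⌉₊ = b := by simp only [x, sample_ceil hτ, hb]
    have hp0 : p 0 = a := hx0 ▸ (hp 0).eq_of_mem (hx0 ▸ hf.left_mem_geodImage)
    have hpn : p ⌈T / τ⌉₊ = b := hxn ▸ (hp _).eq_of_mem (hxn ▸ hf.right_mem_geodImage)
    have hgap : ∀ i < ⌈T / τ⌉₊,
        dist (p i) (p (i + 1)) ≤ 2 * morseRadius K ε δ + morseStep K ε δ := fun i hi => by
      linarith [dist_triangle4 (p i) (x i) (x (i + 1)) (p (i + 1)), dist_comm (p i) (x i),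
        hxp hi.le, hxp (Nat.succ_le_of_lt hi), dist_comm (p (i + 1)) (x (i + 1)), hstep i]
    obtain ⟨i, hi, hzi⟩ :=
      hf.exists_dist_le_of_chain (by positivity) (fun i => (hp i).1) hp0 hpn hgap hz
    refine ⟨sample τ T i, sample_mem_Icc hτ.le hT i, ?_⟩
    linarith [dist_triangle z (p i) (x i), hxp hi, dist_comm (p i) (x i)]

end IsDeltaHyperbolic

namespace IsQuasiIsometricEmbedding

variable {Y : Type*} [MetricSpace Y] {K ε : ℝ} {φ : X → Y}

theorem isQuasiGeodesicOn_comp (hφ : IsQuasiIsometricEmbedding K ε φ) {f : ℝ → X} {a b : X}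
    (hf : IsGeodesicSegment f a b) : IsQuasiGeodesicOn K ε (dist a b) fun t => φ (f t) :=
  fun s hs t ht => by simpa only [hf.2.2 s hs t ht] using hφ (f s) (f t)

theorem dist_apply_nearestPoint_le (hφ : IsQuasiIsometricEmbedding K ε φ) {δ : ℝ} (hδ : 0 ≤ δ)
    (hK : 1 ≤ K) (hε : 0 ≤ ε) (hgeoX : IsGeodesicSpace X) (hX : IsDeltaHyperbolic X δ)
    (hgeoY : IsGeodesicSpace Y) (hY : IsDeltaHyperbolic Y δ) {f : ℝ → X} {a b : X}
    (hf : IsGeodesicSegment f a b) {p q x : X} (hq : IsNearestPoint (geodImage f a b) p q)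
    (hx : x ∈ geodImage f a b) :
    dist (φ p) (φ q) ≤ dist (φ p) (φ x) + (morseConst K ε δ + 3 * K * δ + ε) := by
  obtain ⟨h, hh⟩ := hgeoX p x
  obtain ⟨m, ⟨t, ht, rfl⟩, hmq⟩ := hX.exists_mem_dist_nearestPoint_le hδ hgeoX hf hq hx hh
  obtain ⟨g, hg⟩ := hgeoY (φ p) (φ x)
  obtain ⟨w, hw, hmw⟩ := (hY.morse hδ hgeoY hg hK hε dist_nonneg (hφ.isQuasiGeodesicOn_comp hh)
    (congrArg φ hh.1) (congrArg φ hh.2.1)).1 t ht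
  have hpw : dist (φ p) w ≤ dist (φ p) (φ x) := by
    linarith [hg.dist_add_dist_of_mem hw, dist_nonneg (x := w) (y := φ x)]
  have hmq' : dist (φ (h t)) (φ q) ≤ K * (3 * δ) + ε :=
    (hφ _ _).2.trans (by gcongr)
  linarith [dist_triangle4 (φ p) w (φ (h t)) (φ q), dist_comm w (φ (h t))]

end IsQuasiIsometricEmbedding

/-- quasi-isometric embeddings of hyperbolic spaces almost commute with
nearest-point projections onto geodesic segments. -/
theorem quasiisometry_almost_commutes_with_projection
    (δ K ε : ℝ) (hδ : 0 ≤ δ) (hK : 1 ≤ K) (hε : 0 ≤ ε) :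
    ∃ C₄ : ℝ, 0 ≤ C₄ ∧
      ∀ (Y₁ Y₂ : Type) [MetricSpace Y₁] [MetricSpace Y₂],
        IsGeodesicSpace Y₁ → IsDeltaHyperbolic Y₁ δ →
        IsGeodesicSpace Y₂ → IsDeltaHyperbolic Y₂ δ →
        ∀ (a b p : Y₁) (μ₁ : ℝ → Y₁), IsGeodesicSegment μ₁ a b →
        ∀ q ∈ geodImage μ₁ a b, (∀ x ∈ geodImage μ₁ a b, dist p q ≤ dist p x) →
        ∀ φ : Y₁ → Y₂,
          (∀ y₁ y₂ : Y₁, (1 / K) * dist y₁ y₂ - ε ≤ dist (φ y₁) (φ y₂) ∧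
            dist (φ y₁) (φ y₂) ≤ K * dist y₁ y₂ + ε) →
        ∀ μ₂ : ℝ → Y₂, IsGeodesicSegment μ₂ (φ a) (φ b) →
        ∀ r ∈ geodImage μ₂ (φ a) (φ b),
          (∀ x ∈ geodImage μ₂ (φ a) (φ b), dist (φ p) r ≤ dist (φ p) x) →
          dist r (φ q) ≤ C₄ := by
  have hK0 : 0 ≤ K := by linarith
  have hM := morseConst_nonneg hK0 hε hδ
  refine ⟨4 * morseConst K ε δ + 3 * K * δ + ε + 6 * δ, by positivity, ?_⟩
  intro Y₁ Y₂ _ _ hgeo₁ hX₁ hgeo₂ hX₂ a b p μ₁ hμ₁ q hq hqmin φ hφ μ₂ hμ₂ r hr hrmin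
  obtain ⟨hnear, hcover⟩ := hX₂.morse hδ hgeo₂ hμ₂ hK hε dist_nonneg
    (IsQuasiIsometricEmbedding.isQuasiGeodesicOn_comp hφ hμ₁) (congrArg φ hμ₁.1)
    (congrArg φ hμ₁.2.1)
  obtain ⟨t, ht, rfl⟩ := hq
  obtain ⟨q', hq', hqq'⟩ := hnear t ht
  obtain ⟨t', ht', hrt'⟩ := hcover r hr
  have hφq := IsQuasiIsometricEmbedding.dist_apply_nearestPoint_le hφ hδ hK hε hgeo₁ hX₁ hgeo₂
    hX₂ hμ₁ ⟨⟨t, ht, rfl⟩, hqmin⟩ ⟨t', ht', rfl⟩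
  have hproj := hX₂.dist_add_dist_le_of_isNearestPoint hδ hgeo₂ hμ₂ ⟨hr, hrmin⟩ hq'
  linarith [dist_triangle (φ p) (φ (μ₁ t)) q', dist_triangle (φ p) r (φ (μ₁ t')),
    dist_triangle r q' (φ (μ₁ t)), dist_comm q' (φ (μ₁ t)), dist_comm r (φ (μ₁ t'))]
end
end

section
/- Let (X,d) be a δ-hyperbolic geodesic metric space, let A ⊆ X be a nonempty C-quasiconvex subset, and let {B_i}_{i∈I} be a family of C-quasiconvex subsets of X each of which has nonempty intersection with A. Then the 'star' A ∪ ⋃_{i∈I} B_i is C'-quasiconvex, where C' depends only on δ and C (one may take C' = C + 2δ). -/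
noncomputable section

open Metric Set

/-- One step of thinness: a point on a geodesic from `a` to `b` is `δ`-close to a point
on some geodesic from `a` to `c` or on some geodesic from `c` to `b`. -/
private lemma thin_step {X : Type} [MetricSpace X] {δ : ℝ}
    (hyp : IsDeltaHyperbolic X δ) (geo : IsGeodesicSpace X)
    {a b : X} (c : X) {h : ℝ → X} (hh : IsGeodesicSegment h a b)
    {x : X} (hx : x ∈ geodImage h a b) :
    ∃ y, dist x y ≤ δ ∧
      ((∃ f, IsGeodesicSegment f a c ∧ y ∈ geodImage f a c) ∨
       (∃ g, IsGeodesicSegment g c b ∧ y ∈ geodImage g c b)) := by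
  obtain ⟨f, hf⟩ := geo a c
  obtain ⟨g, hg⟩ := geo c b
  obtain ⟨y, hy, hd⟩ := hyp a c b f g h hf hg hh x hx
  rcases hy with hy | hy
  · exact ⟨y, hd, Or.inl ⟨f, hf, hy⟩⟩
  · exact ⟨y, hd, Or.inr ⟨g, hg, hy⟩⟩

/-- in a `δ`-hyperbolic geodesic space, the 'star' of a nonempty
`C`-quasiconvex set `A` and a family of `C`-quasiconvex sets all meeting `A` is
`C'`-quasiconvex with `C' = C + 2δ` (depending only on `δ` and `C`). -/
theorem star_of_quasiconvex_sets_quasiconvex (δ C : ℝ) (hδ : 0 ≤ δ) (hC : 0 ≤ C) :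
    ∃ C' : ℝ, C' = C + 2 * δ ∧
      ∀ (X : Type) [MetricSpace X], IsGeodesicSpace X → IsDeltaHyperbolic X δ →
        ∀ A : Set X, A.Nonempty → IsQuasiconvexSet C A →
        ∀ (I : Type) (B : I → Set X),
          (∀ i : I, IsQuasiconvexSet C (B i)) →
          (∀ i : I, (B i ∩ A).Nonempty) →
          IsQuasiconvexSet C' (A ∪ ⋃ i : I, B i) := by
  refine ⟨C + 2 * δ, rfl, ?_⟩
  intro X _ geo hyp A _ hA I B hB hBA
  intro a ha b hb f hf x hx
  have hAZ : ∀ z ∈ A, z ∈ A ∪ ⋃ i : I, B i := fun z hz => Or.inl hz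
  have hBZ : ∀ i : I, ∀ z ∈ B i, z ∈ A ∪ ⋃ i : I, B i :=
    fun i z hz => Or.inr (mem_iUnion.mpr ⟨i, hz⟩)
  rcases ha with ha | ha
  · rcases hb with hb | hb
    · -- both endpoints in A
      obtain ⟨z, hz, hzd⟩ := hA a ha b hb f hf x hx
      exact ⟨z, hAZ z hz, by linarith⟩
    · -- a ∈ A, b ∈ B j
      rw [mem_iUnion] at hb
      obtain ⟨j, hbj⟩ := hb
      obtain ⟨d, hdB, hdA⟩ := hBA j
      obtain ⟨y, hxy, hy | hy⟩ := thin_step hyp geo d hf hx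
      · obtain ⟨g, hg, hyg⟩ := hy
        obtain ⟨z, hz, hzd⟩ := hA a ha d hdA g hg y hyg
        exact ⟨z, hAZ z hz, by
          have := dist_triangle x y z; linarith⟩
      · obtain ⟨g, hg, hyg⟩ := hy
        obtain ⟨z, hz, hzd⟩ := hB j d hdB b hbj g hg y hyg
        exact ⟨z, hBZ j z hz, by
          have := dist_triangle x y z; linarith⟩
  · rw [mem_iUnion] at ha
    obtain ⟨i, hai⟩ := ha
    obtain ⟨c, hcB, hcA⟩ := hBA i
    obtain ⟨y, hxy, hy | hy⟩ := thin_step hyp geo c hf hx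
    · -- y on a geodesic from a to c, both in B i
      obtain ⟨g, hg, hyg⟩ := hy
      obtain ⟨z, hz, hzd⟩ := hB i a hai c hcB g hg y hyg
      exact ⟨z, hBZ i z hz, by
        have := dist_triangle x y z; linarith⟩
    · -- y on a geodesic from c to b
      obtain ⟨g, hg, hyg⟩ := hy
      rcases hb with hb | hb
      · -- b ∈ A, c ∈ A
        obtain ⟨z, hz, hzd⟩ := hA c hcA b hb g hg y hyg
        exact ⟨z, hAZ z hz, by
          have := dist_triangle x y z; linarith⟩
      · -- b ∈ B j : second thinness step through d ∈ B j ∩ A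
        rw [mem_iUnion] at hb
        obtain ⟨j, hbj⟩ := hb
        obtain ⟨d, hdB, hdA⟩ := hBA j
        obtain ⟨y₂, hyy₂, hy₂ | hy₂⟩ := thin_step hyp geo d hg hyg
        · obtain ⟨g₂, hg₂, hy₂g⟩ := hy₂
          obtain ⟨z, hz, hzd⟩ := hA c hcA d hdA g₂ hg₂ y₂ hy₂g
          exact ⟨z, hAZ z hz, by
            have h1 := dist_triangle x y z
            have h2 := dist_triangle y y₂ z; linarith⟩
        · obtain ⟨g₂, hg₂, hy₂g⟩ := hy₂
          obtain ⟨z, hz, hzd⟩ := hB j d hdB b hbj g₂ hg₂ y₂ hy₂g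
          exact ⟨z, hBZ j z hz, by
            have h1 := dist_triangle x y z
            have h2 := dist_triangle y y₂ z; linarith⟩
end
end
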